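/- Fix n ≥ 1, set b = ⌊log₂ n⌋ + 2, and let t be an integer. In ℤ[X₀, …, X_{b−1}], let I be the ideal generated by Xᵢ² − (2·Xᵢ + X_{i+1}) for 0 ≤ i ≤ b−2 together with X_{b−1}². If g is a multilinear polynomial with (t + 1 + X₀)ⁿ − g ∈ I, then evaluating g at X₀ = X₁ = ⋯ = X_{b−1} = 1 gives ∑_{k=0}^{n} C(n,k)·t^{n−k}·C(2k,k), the t-th binomial transform of the central binomial coefficient sequence. -/

import Mathlib

/-! Send `Xᵢ ↦ Dᵢ + 1 ∈ ℤ[s]`, where `D₀ = s` and `Dᵢ₊₁ = Dᵢ² - 2`, so that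
`Dᵢ(u + u⁻¹) = u^(2^i) + u^(-2^i)`. This kills `Xᵢ² - (2Xᵢ + Xᵢ₊₁)` and sends `X_{b-1}²` to a
polynomial of degree `2^b`. The images of the multilinear `g` and of `(t + 1 + X₀)ⁿ` (as `n < 2^b`)
both have degree `< 2^b` and are congruent modulo it, so they coincide.

Now substitute `s = u + u⁻¹` and take the constant coefficient in `u`. A multilinear monomial
becomes `∏_{i ∈ S} (u^(2^i) + u^(-2^i) + 1)`, whose exponents are the sums `∑ εᵢ 2^i` with
`εᵢ ∈ {-1, 0, 1}`; only `ε = 0` gives `0`, so every monomial contributes `1` and the total is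
`g(1, …, 1)`. On the other side `(t + u + 2 + u⁻¹)ⁿ = (t + (1 + u)² u⁻¹)ⁿ` has constant coefficient
`∑ C(n,k) t^(n-k) C(2k,k)`. -/

open MvPolynomial

/-- The generators of the ideal `I`: `Xᵢ² − (2Xᵢ + X_{i+1})` for `i ≤ b-2`, and `X_{b-1}²`. -/
noncomputable def gens (b : ℕ) : Fin b → MvPolynomial (Fin b) ℤ := fun i =>
  if h : (i : ℕ) + 1 < b then X i ^ 2 - (2 * X i + X ⟨(i : ℕ) + 1, h⟩) else X i ^ 2

open scoped Polynomial

noncomputable def dyadicLucas : ℕ → ℤ[X]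
  | 0 => Polynomial.X
  | i + 1 => dyadicLucas i ^ 2 - 2

theorem natDegree_dyadicLucas (i : ℕ) : (dyadicLucas i).natDegree = 2 ^ i := by
  induction i with
  | zero => exact Polynomial.natDegree_X
  | succ i ih =>
    have hsq : (dyadicLucas i ^ 2).natDegree = 2 ^ (i + 1) := by
      rw [Polynomial.natDegree_pow, ih, pow_succ, mul_comm]
    have hlt : (2 : ℤ[X]).natDegree < (dyadicLucas i ^ 2).natDegree := by
      rw [hsq, Polynomial.natDegree_ofNat]
      positivity
    rw [dyadicLucas, Polynomial.natDegree_sub_eq_left_of_natDegree_lt hlt, hsq]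

theorem aeval_dyadicLucas {R : Type*} [CommRing R] [Algebra ℤ R] {x y : R} (h : x * y = 1) (i : ℕ) :
    Polynomial.aeval (x + y) (dyadicLucas i) = x ^ 2 ^ i + y ^ 2 ^ i := by
  induction i with
  | zero => simp [dyadicLucas]
  | succ i ih =>
    have hxy : x ^ 2 ^ i * y ^ 2 ^ i = 1 := by rw [← mul_pow, h, one_pow]
    rw [dyadicLucas, map_sub, map_pow, ih, map_ofNat, pow_succ 2 i, pow_mul, pow_mul]
    linear_combination 2 * hxy

noncomputable def lucasHom (b : ℕ) : MvPolynomial (Fin b) ℤ →ₐ[ℤ] ℤ[X] :=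
  aeval fun i => dyadicLucas i + 1

theorem dvd_lucasHom_gens (b : ℕ) (i : Fin b) :
    (dyadicLucas (b - 1) + 1) ^ 2 ∣ lucasHom b (gens b i) := by
  unfold gens
  split_ifs with h
  · have hzero : lucasHom b (X i ^ 2 - (2 * X i + X ⟨i + 1, h⟩)) = 0 := by
      simp only [lucasHom, map_sub, map_add, map_mul, map_pow, map_ofNat, aeval_X, dyadicLucas]
      ring
    rw [hzero]
    exact dvd_zero _
  · have hi : (i : ℕ) = b - 1 := by omega
    simp [lucasHom, hi]

theorem dvd_lucasHom_of_mem_span {b : ℕ} {p : MvPolynomial (Fin b) ℤ}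
    (hp : p ∈ Ideal.span (Set.range (gens b))) :
    (dyadicLucas (b - 1) + 1) ^ 2 ∣ lucasHom b p := by
  have hle : Ideal.span (Set.range (gens b)) ≤
      (Ideal.span {(dyadicLucas (b - 1) + 1) ^ 2}).comap (lucasHom b) := by
    rw [Ideal.span_le]
    rintro _ ⟨i, rfl⟩
    exact Ideal.mem_span_singleton.2 (dvd_lucasHom_gens b i)
  exact Ideal.mem_span_singleton.1 (hle hp)

theorem lucasHom_monomial {b : ℕ} {m : Fin b →₀ ℕ} (hm : ∀ i, m i ≤ 1) (c : ℤ) :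
    lucasHom b (monomial m c) = Polynomial.C c * ∏ i ∈ m.support, (dyadicLucas i + 1) := by
  rw [lucasHom, aeval_monomial, Finsupp.prod, Polynomial.algebraMap_eq]
  congr 1
  refine Finset.prod_congr rfl fun i hi => ?_
  rw [le_antisymm (hm i) (Nat.one_le_iff_ne_zero.2 (Finsupp.mem_support_iff.1 hi)), pow_one]

theorem lucasHom_eq_sum {b : ℕ} {g : MvPolynomial (Fin b) ℤ}
    (hml : ∀ m ∈ g.support, ∀ i : Fin b, m i ≤ 1) :
    lucasHom b g = ∑ m ∈ g.support,
      Polynomial.C (coeff m g) * ∏ i ∈ m.support, (dyadicLucas i + 1) := by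
  conv_lhs => rw [g.as_sum]
  rw [map_sum]
  exact Finset.sum_congr rfl fun m hm => lucasHom_monomial (hml m hm) _

theorem sum_two_pow_lt {b : ℕ} (S : Finset (Fin b)) : ∑ i ∈ S, 2 ^ (i : ℕ) < 2 ^ b := by
  calc ∑ i ∈ S, 2 ^ (i : ℕ) ≤ ∑ i : Fin b, 2 ^ (i : ℕ) :=
        Finset.sum_le_sum_of_subset (Finset.subset_univ S)
    _ = 2 ^ b - 1 := by rw [Fin.sum_univ_eq_sum_range (fun i => 2 ^ i), Nat.geomSum_eq le_rfl]; simp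
    _ < 2 ^ b := Nat.sub_lt (Nat.two_pow_pos b) one_pos

theorem natDegree_prod_dyadicLucas_add_one_lt {b : ℕ} (S : Finset (Fin b)) :
    (∏ i ∈ S, (dyadicLucas i + 1)).natDegree < 2 ^ b := by
  refine (Polynomial.natDegree_prod_le _ _).trans_lt
    ((Finset.sum_le_sum fun i _ => ?_).trans_lt (sum_two_pow_lt S))
  rw [← Polynomial.C_1, Polynomial.natDegree_add_C, natDegree_dyadicLucas]

theorem natDegree_lucasHom_lt {b : ℕ} {g : MvPolynomial (Fin b) ℤ}
    (hml : ∀ m ∈ g.support, ∀ i : Fin b, m i ≤ 1) : (lucasHom b g).natDegree < 2 ^ b := by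
  rw [lucasHom_eq_sum hml]
  refine Nat.lt_of_le_pred (Nat.two_pow_pos b)
    (Polynomial.natDegree_sum_le_of_forall_le _ _ fun m _ => ?_)
  exact (Polynomial.natDegree_C_mul_le _ _).trans
    (Nat.le_pred_of_lt (natDegree_prod_dyadicLucas_add_one_lt _))

theorem lucasHom_eq_of_sub_mem_span {b : ℕ} (hb : 0 < b) {p q : MvPolynomial (Fin b) ℤ}
    (hp : (lucasHom b p).natDegree < 2 ^ b) (hq : (lucasHom b q).natDegree < 2 ^ b)
    (hpq : p - q ∈ Ideal.span (Set.range (gens b))) : lucasHom b p = lucasHom b q := by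
  have hdeg : ((dyadicLucas (b - 1) + 1) ^ 2).natDegree = 2 ^ b := by
    rw [Polynomial.natDegree_pow, ← Polynomial.C_1, Polynomial.natDegree_add_C,
      natDegree_dyadicLucas,
      ← pow_succ', Nat.sub_add_cancel hb]
  rw [← sub_eq_zero, ← map_sub]
  refine Polynomial.eq_zero_of_dvd_of_natDegree_lt (dvd_lucasHom_of_mem_span hpq) ?_
  rw [map_sub, hdeg]
  exact (Polynomial.natDegree_sub_le _ _).trans_lt (max_lt hp hq)

open scoped LaurentPolynomial
open LaurentPolynomial (T)

theorem coeff_T_add_T_neg_add_one_mul {R : Type*} [Semiring R] (a : ℤ) (p : R[T;T⁻¹]) (k : ℤ) :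
    ((T a + T (-a) + 1) * p).coeff k = p.coeff (k - a) + p.coeff (k + a) + p.coeff k := by
  simp only [add_mul, one_mul, AddMonoidAlgebra.coeff_add, Finsupp.add_apply, LaurentPolynomial.T,
    AddMonoidAlgebra.coeff_single_mul_apply, neg_neg, one_mul]
  rw [neg_add_eq_sub, add_comm a]

theorem coeff_prod_eq_zero_of_two_pow_le {R : Type*} [CommSemiring R] (S : Finset ℕ) {c : ℕ}
    (hS : ∀ i ∈ S, i < c) {k : ℤ} (hk : 2 ^ c ≤ |k|) :
    (∏ i ∈ S, (T (2 ^ i) + T (-2 ^ i) + 1) : R[T;T⁻¹]).coeff k = 0 := by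
  induction S using Finset.induction_on_max generalizing c k with
  | empty =>
    rw [Finset.prod_empty, ← map_one LaurentPolynomial.C, LaurentPolynomial.C_apply, if_neg]
    rintro rfl
    rw [abs_zero] at hk
    exact hk.not_gt (by positivity)
  | insert a S hlt ih =>
    have hac : 2 * (2 : ℤ) ^ a ≤ 2 ^ c := by
      rw [← pow_succ']
      exact pow_le_pow_right₀ one_le_two (hS a (Finset.mem_insert_self a S))
    rw [Finset.prod_insert (fun ha => (hlt a ha).false), coeff_T_add_T_neg_add_one_mul,
      ih hlt, ih hlt, ih hlt, add_zero, add_zero] <;>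
    · generalize (2 : ℤ) ^ a = N at *
      generalize (2 : ℤ) ^ c = M at *
      rw [le_abs'] at hk ⊢
      omega

theorem coeff_zero_prod {R : Type*} [CommSemiring R] (S : Finset ℕ) :
    (∏ i ∈ S, (T (2 ^ i) + T (-2 ^ i) + 1) : R[T;T⁻¹]).coeff 0 = 1 := by
  induction S using Finset.induction_on_max with
  | empty =>
    rw [Finset.prod_empty, ← map_one LaurentPolynomial.C, LaurentPolynomial.C_apply, if_pos rfl]
  | insert a S hlt ih =>
    rw [Finset.prod_insert (fun ha => (hlt a ha).false), coeff_T_add_T_neg_add_one_mul, ih,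
      coeff_prod_eq_zero_of_two_pow_le S hlt, coeff_prod_eq_zero_of_two_pow_le S hlt,
      zero_add, zero_add] <;>
    simp

theorem coeff_T_neg_mul_toLaurent {R : Type*} [Semiring R] (p : R[X]) (k : ℕ) :
    (T (-k) * Polynomial.toLaurent p).coeff 0 = p.coeff k := by
  rw [LaurentPolynomial.T, AddMonoidAlgebra.coeff_single_mul_apply, one_mul, neg_neg, add_zero,
    LaurentPolynomial.coeff_toLaurent]
  exact Finsupp.mapDomain_apply Nat.cast_injective _ k

theorem coeff_zero_T_add_T_neg_add_two_pow {R : Type*} [CommRing R] (k : ℕ) :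
    ((T 1 + T (-1) + 2 : R[T;T⁻¹]) ^ k).coeff 0 = (2 * k).choose k := by
  have hsq : (T 1 + T (-1) + 2 : R[T;T⁻¹])
      = T (-1) * Polynomial.toLaurent ((1 + Polynomial.X) ^ 2) := by
    have h : (T (-1) * T 1 : R[T;T⁻¹]) = 1 := by rw [← LaurentPolynomial.T_add]; simp
    simp only [map_pow, map_add, map_one, Polynomial.toLaurent_X]
    linear_combination (-(2 + T 1 : R[T;T⁻¹])) * h
  rw [hsq, mul_pow, LaurentPolynomial.T_pow, ← map_pow, ← pow_mul, mul_neg_one,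
    coeff_T_neg_mul_toLaurent, Polynomial.coeff_one_add_X_pow]

theorem coeff_zero_aeval_X_add_C_pow (c : ℤ) (n : ℕ) :
    (Polynomial.aeval (T 1 + T (-1) : ℤ[T;T⁻¹]) ((Polynomial.X + Polynomial.C (c + 2)) ^ n)).coeff 0
      = ∑ k ∈ Finset.range (n + 1), (n.choose k : ℤ) * c ^ (n - k) * ((2 * k).choose k : ℤ) := by
  have h : Polynomial.aeval (T 1 + T (-1) : ℤ[T;T⁻¹]) ((Polynomial.X + Polynomial.C (c + 2)) ^ n)
      = (T 1 + T (-1) + 2 + LaurentPolynomial.C c) ^ n := by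
    rw [map_pow, map_add, Polynomial.aeval_X, Polynomial.aeval_C, map_add, map_ofNat,
      ← LaurentPolynomial.C_eq_algebraMap]
    ring
  rw [h, add_pow, AddMonoidAlgebra.coeff_sum, Finsupp.finsetSum_apply]
  refine Finset.sum_congr rfl fun k _ => ?_
  have hconst : LaurentPolynomial.C c ^ (n - k) * ((n.choose k : ℕ) : ℤ[T;T⁻¹])
      = LaurentPolynomial.C (c ^ (n - k) * n.choose k) := by
    rw [map_mul, map_pow, map_natCast]
  rw [mul_assoc, hconst, mul_comm, ← LaurentPolynomial.smul_eq_C_mul,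
    AddMonoidAlgebra.coeff_smul_apply, coeff_zero_T_add_T_neg_add_two_pow, smul_eq_mul]
  ring

theorem coeff_zero_aeval_lucasHom {b : ℕ} {g : MvPolynomial (Fin b) ℤ}
    (hml : ∀ m ∈ g.support, ∀ i : Fin b, m i ≤ 1) :
    (Polynomial.aeval (T 1 + T (-1) : ℤ[T;T⁻¹]) (lucasHom b g)).coeff 0
      = eval (fun _ => 1) g := by
  have hT : (T 1 * T (-1) : ℤ[T;T⁻¹]) = 1 := by rw [← LaurentPolynomial.T_add]; simp
  rw [lucasHom_eq_sum hml, map_sum, AddMonoidAlgebra.coeff_sum, Finsupp.finsetSum_apply, eval_eq]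
  refine Finset.sum_congr rfl fun m _ => ?_
  have hfactor (i : Fin b) : Polynomial.aeval (T 1 + T (-1) : ℤ[T;T⁻¹]) (dyadicLucas i + 1)
      = T (2 ^ (i : ℕ)) + T (-2 ^ (i : ℕ)) + 1 := by
    rw [map_add, aeval_dyadicLucas hT, map_one, LaurentPolynomial.T_pow, LaurentPolynomial.T_pow]
    push_cast
    ring_nf
  have hprod := coeff_zero_prod (R := ℤ) (m.support.map Fin.valEmbedding)
  rw [Finset.prod_map] at hprod
  rw [map_mul, Polynomial.aeval_C, map_prod, Finset.prod_congr rfl fun i _ => hfactor i,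
    ← LaurentPolynomial.C_eq_algebraMap, ← LaurentPolynomial.smul_eq_C_mul,
    AddMonoidAlgebra.coeff_smul_apply]
  simp only [Fin.valEmbedding_apply] at hprod
  simp [hprod]

theorem stmt9 (n : ℕ) (b : ℕ) (hb : b = Nat.log 2 n + 2) (t : ℤ)
    (g : MvPolynomial (Fin b) ℤ)
    (hml : ∀ m ∈ g.support, ∀ i : Fin b, m i ≤ 1)
    (hg : (C t + 1 + X (⟨0, by omega⟩ : Fin b)) ^ n - g ∈ Ideal.span (Set.range (gens b))) :
    eval (fun _ : Fin b => (1 : ℤ)) g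
      = ∑ k ∈ Finset.range (n + 1),
          (n.choose k : ℤ) * t ^ (n - k) * ((2 * k).choose k : ℤ) := by
  have hpow : lucasHom b ((C t + 1 + X (⟨0, by omega⟩ : Fin b)) ^ n)
      = (Polynomial.X + Polynomial.C (t + 2)) ^ n := by
    simp only [lucasHom, map_pow, map_add, map_one, aeval_X, aeval_C, dyadicLucas,
      Polynomial.algebraMap_eq, Polynomial.C_ofNat]
    ring
  have hdeg : (lucasHom b ((C t + 1 + X (⟨0, by omega⟩ : Fin b)) ^ n)).natDegree < 2 ^ b := by
    rw [hpow, Polynomial.natDegree_pow, Polynomial.natDegree_X_add_C, mul_one]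
    exact (Nat.lt_pow_succ_log_self one_lt_two n).trans_le (Nat.pow_le_pow_right two_pos (by omega))
  rw [← coeff_zero_aeval_lucasHom hml,
    ← lucasHom_eq_of_sub_mem_span (by omega) hdeg (natDegree_lucasHom_lt hml) hg, hpow,
    coeff_zero_aeval_X_add_C_pow]
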